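/- If Γ̃ is a minimal subfamily for Mod_{p,σ}(Γ) (1 < p < ∞), then the usage vectors {N(γ,·) : γ ∈ Γ̃} are linearly independent in ℝ^E; in particular |Γ̃| ≤ |E|. -/

import Mathlib

/-!
A minimal family `Γ̃` has a minimizing density `ρ` (by compactness), and minimality makes every
constraint active, `γ ⬝ᵥ ρ = 1` for `γ ∈ Γ̃`: a slack constraint could be dropped without lowering
the modulus. By Farkas' lemma the gradient of the energy at `ρ` is a nonnegative combination of the
usage vectors (KKT). If these were linearly dependent, a conic Carathéodory step would remove one
of them, `γ`, from that combination; by convexity `ρ` would then still be optimal for `Γ̃ \ {γ}`,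
contradicting minimality.
-/

/-- The `p`-modulus (as a real infimum) of a family `Γ` of usage vectors. -/
noncomputable def pMod {E : Type*} [Fintype E] (σ : E → ℝ) (p : ℝ) (Γ : Set (E → ℝ)) : ℝ :=
  sInf {x : ℝ | ∃ ρ : E → ℝ, (∀ e, 0 ≤ ρ e) ∧
    (∀ γ ∈ Γ, 1 ≤ ∑ e, γ e * ρ e) ∧ x = ∑ e, σ e * |ρ e| ^ p}

section ConicCombination

variable {ι 𝕜 V : Type*} [Field 𝕜] [LinearOrder 𝕜] [AddCommGroup V] [Module 𝕜 V]

theorem exists_nonneg_sum_insert_smul_eq [DecidableEq ι] {s : Finset ι} {j : ι} (hj : j ∉ s)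
    {a : ι → V} {c : ι → 𝕜} (hc : ∀ i ∈ s, 0 ≤ c i) {μ : 𝕜} (hμ : 0 ≤ μ) :
    ∃ c' : ι → 𝕜, (∀ i ∈ insert j s, 0 ≤ c' i) ∧
      ∑ i ∈ insert j s, c' i • a i = ∑ i ∈ s, c i • a i + μ • a j := by
  have hupdate : ∀ i ∈ s, Function.update c j μ i = c i := fun i hi =>
    Function.update_of_ne (ne_of_mem_of_not_mem hi hj) _ _
  refine ⟨Function.update c j μ, ?_, ?_⟩
  · simp only [Finset.forall_mem_insert, Function.update_self]
    exact ⟨hμ, fun i hi => hupdate i hi ▸ hc i hi⟩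
  · rw [Finset.sum_insert hj, Function.update_self, add_comm]
    congr 1
    exact Finset.sum_congr rfl fun i hi => by rw [hupdate i hi]

theorem exists_nonneg_sum_smul_eq_or_exists_dual_neg [IsStrictOrderedRing 𝕜] (s : Finset ι)
    (a : ι → V) (g : V) :
    (∃ c : ι → 𝕜, (∀ i ∈ s, 0 ≤ c i) ∧ ∑ i ∈ s, c i • a i = g) ∨
      ∃ f : Module.Dual 𝕜 V, (∀ i ∈ s, 0 ≤ f (a i)) ∧ f g < 0 := by
  classical
  induction s using Finset.induction_on generalizing a g with
  | empty =>
    by_cases hg : g = 0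
    · exact .inl ⟨0, by simp, by simp [hg]⟩
    obtain ⟨f, hf⟩ := Module.Projective.exists_dual_ne_zero 𝕜 hg
    rcases hf.lt_or_gt with hf | hf
    · exact .inr ⟨f, by simp, hf⟩
    · exact .inr ⟨-f, by simp, by simpa using hf⟩
  | @insert j s hj ih =>
    rcases ih a g with ⟨c, hc, hsum⟩ | ⟨f, hf, hfg⟩
    · obtain ⟨c', hc', hsum'⟩ := exists_nonneg_sum_insert_smul_eq hj (a := a) hc le_rfl
      exact .inl ⟨c', hc', by simpa [hsum] using hsum'⟩
    by_cases hfj : 0 ≤ f (a j)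
    · exact .inr ⟨f, Finset.forall_mem_insert _ _ _ |>.2 ⟨hfj, hf⟩, hfg⟩
    push Not at hfj
    -- project along `a j` onto the kernel of `f`
    set P : V →ₗ[𝕜] V := LinearMap.id - (f (a j))⁻¹ • f.smulRight (a j) with hP
    have hPapply : ∀ v, P v = v - (f v / f (a j)) • a j := fun v => by
      simp [hP, div_eq_inv_mul, mul_smul]
    have hPj : P (a j) = 0 := by rw [hPapply, div_self hfj.ne, one_smul, sub_self]
    rcases ih (P ∘ a) (P g) with ⟨c, hc, hsum⟩ | ⟨f', hf', hf'g⟩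
    · have hf_sum : 0 ≤ f (∑ i ∈ s, c i • a i) := by
        simpa [map_sum] using Finset.sum_nonneg fun i hi => mul_nonneg (hc i hi) (hf i hi)
      have hP_sum : P (∑ i ∈ s, c i • a i) = P g := by simpa [map_sum] using hsum
      rw [hPapply, hPapply] at hP_sum
      obtain ⟨c', hc', hsum'⟩ := exists_nonneg_sum_insert_smul_eq hj (a := a) hc
        (μ := (f g - f (∑ i ∈ s, c i • a i)) / f (a j)) (div_nonneg_of_nonpos (by linarith) hfj.le)
      refine .inl ⟨c', hc', ?_⟩
      rw [hsum']
      linear_combination (norm := module) hP_sum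
    · refine .inr ⟨f' ∘ₗ P, ?_, hf'g⟩
      simp only [Finset.forall_mem_insert, LinearMap.comp_apply, hPj, map_zero, le_refl, true_and]
      exact hf'

theorem exists_nonneg_sum_erase_smul_eq_of_not_linearIndepOn [IsStrictOrderedRing 𝕜]
    [DecidableEq ι] {s : Finset ι} {a : ι → V} (hdep : ¬LinearIndepOn 𝕜 a s) {c : ι → 𝕜}
    (hc : ∀ i ∈ s, 0 ≤ c i) :
    ∃ j ∈ s, ∃ c' : ι → 𝕜, (∀ i ∈ s.erase j, 0 ≤ c' i) ∧
      ∑ i ∈ s.erase j, c' i • a i = ∑ i ∈ s, c i • a i := by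
  obtain ⟨f, hf, hpos⟩ : ∃ f : ι → 𝕜, ∑ i ∈ s, f i • a i = 0 ∧ (s.filter (0 < f ·)).Nonempty := by
    obtain ⟨f, hf, i, hi, hfi⟩ := not_linearIndepOn_finset_iff.mp hdep
    rcases hfi.lt_or_gt with hfi | hfi
    · exact ⟨-f, by simp [hf], i, by simpa [hi] using hfi⟩
    · exact ⟨f, hf, i, by simpa [hi] using hfi⟩
  -- move along `-f` until the first coefficient hits zero
  obtain ⟨j, hj, hjmin⟩ := (s.filter (0 < f ·)).exists_min_image (fun i => c i / f i) hpos
  rw [Finset.mem_filter] at hj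
  set t := c j / f j
  have ht : 0 ≤ t := div_nonneg (hc j hj.1) hj.2.le
  refine ⟨j, hj.1, fun i => c i - t * f i, fun i hi => ?_, ?_⟩
  · have hi := Finset.mem_of_mem_erase hi
    rcases le_or_gt (f i) 0 with hfi | hfi
    · nlinarith [hc i hi]
    · have := hjmin i (Finset.mem_filter.mpr ⟨hi, hfi⟩)
      rw [le_div_iff₀ hfi] at this
      linarith
  · rw [Finset.sum_erase s (by simp [t, div_mul_cancel₀ _ hj.2.ne'])]
    simp [sub_smul, Finset.sum_sub_distrib, mul_smul, ← Finset.smul_sum, hf]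

end ConicCombination

open Filter Topology

namespace Modulus

variable {E : Type*} [Fintype E]

def IsAdmissible (Γ : Set (E → ℝ)) (ρ : E → ℝ) : Prop :=
  0 ≤ ρ ∧ ∀ γ ∈ Γ, 1 ≤ γ ⬝ᵥ ρ

noncomputable def energy (σ : E → ℝ) (p : ℝ) (ρ : E → ℝ) : ℝ :=
  ∑ e, σ e * |ρ e| ^ p

noncomputable def energyGrad (σ : E → ℝ) (p : ℝ) (ρ : E → ℝ) : E → ℝ :=
  fun e => σ e * (p * |ρ e| ^ (p - 2) * ρ e)

variable {σ : E → ℝ} {p : ℝ} {Γ : Set (E → ℝ)} {ρ : E → ℝ}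

theorem pMod_eq_sInf_image : pMod σ p Γ = sInf (energy σ p '' {ρ | IsAdmissible Γ ρ}) := by
  unfold pMod
  congr 1
  ext x
  simp [energy, IsAdmissible, dotProduct, Pi.le_def, eq_comm, and_assoc]

theorem energy_nonneg (hσ : 0 ≤ σ) (ρ : E → ℝ) : 0 ≤ energy σ p ρ :=
  Finset.sum_nonneg fun e _ => mul_nonneg (hσ e) (by positivity)

theorem pMod_nonneg (hσ : 0 ≤ σ) : 0 ≤ pMod σ p Γ := by
  rw [pMod_eq_sInf_image]
  exact Real.sInf_nonneg (by rintro _ ⟨ρ, -, rfl⟩; exact energy_nonneg hσ ρ)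

theorem pMod_le_energy (hσ : 0 ≤ σ) (hρ : IsAdmissible Γ ρ) : pMod σ p Γ ≤ energy σ p ρ := by
  rw [pMod_eq_sInf_image]
  exact csInf_le ⟨0, by rintro _ ⟨ρ, -, rfl⟩; exact energy_nonneg hσ ρ⟩ ⟨ρ, hρ, rfl⟩

theorem le_pMod {m : ℝ} (hΓ : ∃ ρ, IsAdmissible Γ ρ)
    (h : ∀ ρ, IsAdmissible Γ ρ → m ≤ energy σ p ρ) : m ≤ pMod σ p Γ := by
  rw [pMod_eq_sInf_image]
  exact le_csInf (Set.Nonempty.image _ hΓ) (by rintro _ ⟨ρ, hρ, rfl⟩; exact h ρ hρ)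

theorem exists_isAdmissible_energy_lt {m : ℝ} (hΓ : ∃ ρ, IsAdmissible Γ ρ)
    (h : pMod σ p Γ < m) : ∃ ρ, IsAdmissible Γ ρ ∧ energy σ p ρ < m := by
  by_contra! h'
  exact h.not_ge (le_pMod hΓ h')

theorem exists_isAdmissible_of_forall_pMod_diff_lt (hσ : 0 ≤ σ)
    (h : ∀ γ ∈ Γ, pMod σ p (Γ \ {γ}) < pMod σ p Γ) : ∃ ρ, IsAdmissible Γ ρ := by
  by_contra hΓ
  -- with no admissible density the infimum is `sInf ∅ = 0`, so no subfamily can lie below it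
  have h0 : pMod σ p Γ = 0 := by
    have hempty : {ρ | IsAdmissible Γ ρ} = ∅ :=
      Set.eq_empty_iff_forall_notMem.mpr fun ρ hρ => hΓ ⟨ρ, hρ⟩
    rw [pMod_eq_sInf_image, hempty, Set.image_empty, Real.sInf_empty]
  obtain ⟨γ, hγ⟩ : Γ.Nonempty := Set.nonempty_iff_ne_empty.mpr fun hempty =>
    hΓ ⟨0, le_rfl, by simp [hempty]⟩
  exact (h γ hγ).not_ge (h0 ▸ pMod_nonneg hσ)

theorem isClosed_setOf_isAdmissible (Γ : Set (E → ℝ)) : IsClosed {ρ | IsAdmissible Γ ρ} := by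
  have h : {ρ | IsAdmissible Γ ρ} = {ρ | 0 ≤ ρ} ∩ ⋂ γ ∈ Γ, {ρ | 1 ≤ γ ⬝ᵥ ρ} := by
    ext; simp [IsAdmissible]
  rw [h]
  exact (isClosed_le continuous_const continuous_id).inter <|
    isClosed_biInter fun γ _ =>
      isClosed_le continuous_const (continuous_const.dotProduct continuous_id)

theorem continuous_energy (hp : 0 ≤ p) : Continuous (energy σ p) := by
  unfold energy
  fun_prop (disch := exact fun _ => Or.inr hp)

theorem abs_le_of_energy_le (hσ : ∀ e, 0 < σ e) (hp : 0 < p) {C : ℝ}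
    (h : energy σ p ρ ≤ C) (e : E) : |ρ e| ≤ (C / σ e) ^ p⁻¹ := by
  have he : σ e * |ρ e| ^ p ≤ C :=
    (Finset.single_le_sum (f := fun e => σ e * |ρ e| ^ p)
      (fun e _ => mul_nonneg (hσ e).le (by positivity)) (Finset.mem_univ e)).trans h
  rw [← Real.rpow_rpow_inv (abs_nonneg (ρ e)) hp.ne']
  exact Real.rpow_le_rpow (by positivity) ((le_div_iff₀' (hσ e)).mpr he) (inv_nonneg.mpr hp.le)

theorem exists_isAdmissible_energy_eq_pMod (hσ : ∀ e, 0 < σ e) (hp : 0 < p)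
    (hΓ : ∃ ρ, IsAdmissible Γ ρ) : ∃ ρ, IsAdmissible Γ ρ ∧ energy σ p ρ = pMod σ p Γ := by
  obtain ⟨ρ₀, hρ₀⟩ := hΓ
  set B : E → ℝ := fun e => (energy σ p ρ₀ / σ e) ^ p⁻¹
  have hbox : IsCompact (Set.univ.pi fun e => Set.Icc (-B e) (B e)) :=
    isCompact_univ_pi fun e => isCompact_Icc
  obtain ⟨ρ, hρ, hmin⟩ := (continuous_energy hp.le).continuousOn.exists_isMinOn'
    (isClosed_setOf_isAdmissible Γ) hρ₀ <| by
      refine Filter.Eventually.filter_mono inf_le_left (Filter.mem_cocompact.mpr ⟨_, hbox, ?_⟩)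
      intro ρ' hρ'
      change energy σ p ρ₀ ≤ energy σ p ρ'
      by_contra! hlt
      exact hρ' fun e _ => abs_le.mp (abs_le_of_energy_le hσ hp hlt.le e)
  refine ⟨ρ, hρ, le_antisymm ?_ (pMod_le_energy (fun e => (hσ e).le) hρ)⟩
  exact le_pMod ⟨ρ, hρ⟩ fun ρ' hρ' => hmin hρ'

theorem hasDerivAt_energy_add_smul (hp : 1 < p) (ρ d : E → ℝ) :
    HasDerivAt (fun t : ℝ => energy σ p (ρ + t • d)) (energyGrad σ p ρ ⬝ᵥ d) 0 := by
  unfold energy energyGrad dotProduct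
  refine HasDerivAt.fun_sum fun e _ => ?_
  have hline : HasDerivAt (fun t : ℝ => ρ e + t * d e) (d e) 0 := by
    simpa using (hasDerivAt_mul_const (d e)).const_add (ρ e)
  have := ((hasDerivAt_abs_rpow (ρ e) hp).comp_of_eq 0 hline (by simp)).const_mul (σ e)
  simpa [mul_assoc] using this

theorem convexOn_abs_rpow (hp : 1 ≤ p) : ConvexOn ℝ Set.univ fun x : ℝ => |x| ^ p := by
  refine ⟨convex_univ, fun x _ y _ a b ha hb hab => ?_⟩
  calc |a • x + b • y| ^ p ≤ (a * |x| + b * |y|) ^ p := by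
        gcongr
        simpa [abs_of_nonneg ha, abs_of_nonneg hb] using abs_add_le (a * x) (b * y)
    _ ≤ a • |x| ^ p + b • |y| ^ p :=
        (convexOn_rpow hp).2 (abs_nonneg x) (abs_nonneg y) ha hb hab

theorem abs_rpow_add_mul_sub_le (hp : 1 < p) (x y : ℝ) :
    |x| ^ p + p * |x| ^ (p - 2) * x * (y - x) ≤ |y| ^ p := by
  rcases lt_trichotomy x y with hxy | rfl | hxy
  · have := (convexOn_abs_rpow hp.le).le_slope_of_hasDerivAt (Set.mem_univ x) (Set.mem_univ y)
      hxy (hasDerivAt_abs_rpow x hp)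
    rw [slope_def_field, le_div_iff₀ (sub_pos.mpr hxy)] at this
    linarith
  · simp
  · have := (convexOn_abs_rpow hp.le).slope_le_of_hasDerivAt (Set.mem_univ y) (Set.mem_univ x)
      hxy (hasDerivAt_abs_rpow x hp)
    rw [slope_def_field, div_le_iff₀ (sub_pos.mpr hxy)] at this
    linarith

theorem energy_add_energyGrad_dotProduct_sub_le (hσ : 0 ≤ σ) (hp : 1 < p) (ρ ρ' : E → ℝ) :
    energy σ p ρ + energyGrad σ p ρ ⬝ᵥ (ρ' - ρ) ≤ energy σ p ρ' := by
  simp only [energy, energyGrad, dotProduct, ← Finset.sum_add_distrib]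
  refine Finset.sum_le_sum fun e _ => ?_
  have := mul_le_mul_of_nonneg_left (abs_rpow_add_mul_sub_le hp (ρ e) (ρ' e)) (hσ e)
  simp only [Pi.sub_apply]
  linarith

theorem energyGrad_dotProduct_nonneg (hp : 1 < p) {d : E → ℝ}
    (h : ∀ᶠ t in 𝓝[>] (0 : ℝ), energy σ p ρ ≤ energy σ p (ρ + t • d)) :
    0 ≤ energyGrad σ p ρ ⬝ᵥ d := by
  have hmin : IsLocalMinOn (fun t : ℝ => energy σ p (ρ + t • d)) (Set.Ioi 0) 0 := by
    simpa [IsLocalMinOn, IsMinFilter] using h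
  have hone : (1 : ℝ) ∈ posTangentConeAt (Set.Ioi 0) (0 : ℝ) :=
    mem_posTangentConeAt_of_frequently_mem <| by
      simpa using (eventually_mem_nhdsWithin (s := Set.Ioi (0 : ℝ))).frequently
  simpa using hmin.hasFDerivWithinAt_nonneg
    (hasDerivAt_energy_add_smul hp ρ d).hasFDerivAt.hasFDerivWithinAt hone

theorem dotProduct_eq_one_of_pMod_diff_lt (hσ : 0 ≤ σ) (hp : 1 < p) (hρ : IsAdmissible Γ ρ)
    (hρmin : energy σ p ρ = pMod σ p Γ) {γ : E → ℝ} (hγ : γ ∈ Γ)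
    (hlt : pMod σ p (Γ \ {γ}) < pMod σ p Γ) : γ ⬝ᵥ ρ = 1 := by
  by_contra hne
  have hgt : 1 < γ ⬝ᵥ ρ := lt_of_le_of_ne (hρ.2 γ hγ) (Ne.symm hne)
  obtain ⟨ρ', hρ', hρ'lt⟩ := exists_isAdmissible_energy_lt
    ⟨ρ, hρ.1, fun γ' hγ' => hρ.2 γ' hγ'.1⟩ (hρmin ▸ hlt)
  have hdesc : energyGrad σ p ρ ⬝ᵥ (ρ' - ρ) < 0 := by
    linarith [energy_add_energyGrad_dotProduct_sub_le hσ hp ρ ρ']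
  refine hdesc.not_ge (energyGrad_dotProduct_nonneg hp ?_)
  -- the constraint of `γ` is slack at `ρ`, so it survives a small step towards `ρ'`
  have hγ_near : ∀ᶠ t in 𝓝 (0 : ℝ), 1 < γ ⬝ᵥ (ρ + t • (ρ' - ρ)) := by
    refine ((Continuous.tendsto ?_ 0).eventually (lt_mem_nhds ?_))
    · fun_prop
    · simpa using hgt
  filter_upwards [nhdsWithin_le_nhds hγ_near, Ioc_mem_nhdsGT one_pos] with t hγt ⟨ht0, ht1⟩
  have hconv : ρ + t • (ρ' - ρ) = (1 - t) • ρ + t • ρ' := by module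
  rw [hρmin]
  refine pMod_le_energy hσ ⟨?_, fun γ' hγ' => ?_⟩
  · rw [hconv]
    exact add_nonneg (smul_nonneg (sub_nonneg.mpr ht1) hρ.1) (smul_nonneg ht0.le hρ'.1)
  · by_cases h : γ' = γ
    · exact h ▸ hγt.le
    · rw [hconv, dotProduct_add, dotProduct_smul, dotProduct_smul, smul_eq_mul, smul_eq_mul]
      nlinarith [hρ.2 γ' hγ', hρ'.2 γ' ⟨hγ', h⟩]

theorem energy_sup_zero_le (hσ : 0 ≤ σ) (hp : 0 ≤ p) (ρ : E → ℝ) :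
    energy σ p (ρ ⊔ 0) ≤ energy σ p ρ := by
  refine Finset.sum_le_sum fun e _ =>
    mul_le_mul_of_nonneg_left (Real.rpow_le_rpow (abs_nonneg _) ?_ hp) (hσ e)
  rw [Pi.sup_apply, Pi.zero_apply, abs_of_nonneg (le_max_right (ρ e) 0)]
  exact max_le (le_abs_self _) (abs_nonneg _)

theorem exists_nonneg_sum_smul_eq_energyGrad (hσ : 0 ≤ σ) (hp : 1 < p) {s : Finset (E → ℝ)}
    (hs : ∀ γ ∈ s, 0 ≤ γ) (hρ : IsAdmissible ↑s ρ) (hρmin : energy σ p ρ = pMod σ p ↑s) :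
    ∃ c : (E → ℝ) → ℝ, (∀ γ ∈ s, 0 ≤ c γ) ∧ ∑ γ ∈ s, c γ • γ = energyGrad σ p ρ := by
  classical
  refine (exists_nonneg_sum_smul_eq_or_exists_dual_neg s id _).resolve_right ?_
  rintro ⟨f, hf, hfg⟩
  set d := (dotProductEquiv ℝ E).symm f
  have hfd : ∀ v, f v = v ⬝ᵥ d := fun v => by
    rw [dotProduct_comm, ← dotProductEquiv_apply_apply, LinearEquiv.apply_symm_apply]
  refine hfg.not_ge ?_
  rw [hfd]
  -- positive parts of `ρ + t • d` stay admissible since the usage vectors are nonnegative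
  refine energyGrad_dotProduct_nonneg hp ?_
  filter_upwards [self_mem_nhdsWithin] with t (ht : 0 < t)
  rw [hρmin]
  refine (pMod_le_energy hσ ⟨le_sup_right, fun γ hγ => ?_⟩).trans
    (energy_sup_zero_le hσ (by linarith) _)
  calc 1 ≤ γ ⬝ᵥ ρ + t * γ ⬝ᵥ d := le_add_of_le_of_nonneg (hρ.2 γ hγ)
          (mul_nonneg ht.le (by simpa [hfd] using hf γ hγ))
    _ = γ ⬝ᵥ (ρ + t • d) := by rw [dotProduct_add, dotProduct_smul, smul_eq_mul]
    _ ≤ γ ⬝ᵥ ((ρ + t • d) ⊔ 0) := dotProduct_le_dotProduct_of_nonneg_left le_sup_left (hs γ hγ)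

theorem energy_le_of_sum_smul_eq_energyGrad (hσ : 0 ≤ σ) (hp : 1 < p) {s : Finset (E → ℝ)}
    {c : (E → ℝ) → ℝ} (hc : ∀ γ ∈ s, 0 ≤ c γ) (hgrad : ∑ γ ∈ s, c γ • γ = energyGrad σ p ρ)
    (hactive : ∀ γ ∈ s, γ ⬝ᵥ ρ = 1) {ρ' : E → ℝ} (hρ' : IsAdmissible ↑s ρ') :
    energy σ p ρ ≤ energy σ p ρ' := by
  have : 0 ≤ energyGrad σ p ρ ⬝ᵥ (ρ' - ρ) := by
    rw [← hgrad, sum_dotProduct]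
    refine Finset.sum_nonneg fun γ hγ => ?_
    rw [smul_dotProduct, dotProduct_sub, hactive γ hγ, smul_eq_mul]
    exact mul_nonneg (hc γ hγ) (sub_nonneg.mpr (hρ'.2 γ hγ))
  linarith [energy_add_energyGrad_dotProduct_sub_le hσ hp ρ ρ']

end Modulus

open Modulus

/-- the usage vectors of a minimal subfamily are linearly independent;
in particular its cardinality is at most `|E|`. -/
theorem stmt11 {E : Type*} [Fintype E]
    (σ : E → ℝ) (hσ : ∀ e, 0 < σ e)
    (p : ℝ) (hp : 1 < p)
    (Γ : Set (E → ℝ)) (hfin : Γ.Finite)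
    (hΓ : ∀ γ ∈ Γ, (∀ e, 0 ≤ γ e) ∧ γ ≠ 0)
    (Γt : Set (E → ℝ)) (hsub : Γt ⊆ Γ)
    (heq : pMod σ p Γt = pMod σ p Γ)
    (hmin : ∀ γ ∈ Γt, pMod σ p (Γt \ {γ}) < pMod σ p Γ) :
    LinearIndependent ℝ (fun γ : Γt => (γ : E → ℝ)) ∧
      Γt.ncard ≤ Fintype.card E := by
  classical
  obtain ⟨s, rfl⟩ := (hfin.subset hsub).exists_finset_coe
  rw [← heq] at hmin
  have hσ₀ : 0 ≤ σ := fun e => (hσ e).le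
  obtain ⟨ρ, hρ, hρmin⟩ := exists_isAdmissible_energy_eq_pMod hσ (zero_lt_one.trans hp)
    (exists_isAdmissible_of_forall_pMod_diff_lt hσ₀ hmin)
  have hactive : ∀ γ ∈ s, γ ⬝ᵥ ρ = 1 := fun γ hγ =>
    dotProduct_eq_one_of_pMod_diff_lt hσ₀ hp hρ hρmin hγ (hmin γ hγ)
  obtain ⟨c, hc, hgrad⟩ := exists_nonneg_sum_smul_eq_energyGrad hσ₀ hp
    (fun γ hγ => (hΓ γ (hsub hγ)).1) hρ hρmin
  have hind : LinearIndepOn ℝ id (s : Set (E → ℝ)) := by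
    by_contra hdep
    obtain ⟨γ, hγ, c', hc', hgrad'⟩ := exists_nonneg_sum_erase_smul_eq_of_not_linearIndepOn hdep hc
    refine (hmin γ hγ).not_ge (hρmin ▸ le_pMod ⟨ρ, hρ.1, fun γ' hγ' => hρ.2 γ' hγ'.1⟩ ?_)
    intro ρ' hρ'
    exact energy_le_of_sum_smul_eq_energyGrad hσ₀ hp hc' (hgrad'.trans hgrad)
      (fun γ' hγ' => hactive γ' (Finset.mem_of_mem_erase hγ')) (by simpa using hρ')
  refine ⟨hind, ?_⟩
  simpa using hind.fintype_card_le_finrank
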